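/- Let 1 < γ < 2, K > 0, 0 < δ < R < ∞. Suppose U is real-analytic on a neighborhood of R, positive on (R-δ, R), satisfies U(R) = 0 and U'(R) ≠ 0, and solves U''(r) + (2/r) U'(r) + K U(r)^{1/(γ-1)} = 0 for all r ∈ (R-δ, R). Then 1/(γ-1) is a positive integer (equivalently, γ/(γ-1) = 1/(γ-1) + 1 is an integer). -/

import Mathlib

open Real Set Filter Topology

/-!
Write `p = 1/(γ-1)`. The equation says `U ^ p = -(U'' + (2/r) U') / K` to the left of `R`, and the
right-hand side is analytic at `R`. Since `U` has a simple zero at `R`, `U ^ p`, hence this analytic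
function, is asymptotic to a nonzero multiple of `(R - r) ^ p` as `r → R⁻`. A nonzero analytic
function is `(r - R) ^ m` times a unit near `R`, so `(R - r) ^ (m - p)` has a nonzero finite limit,
which forces `p = m`.
-/

theorem eq_zero_of_tendsto_rpow {α : Type*} {l : Filter α} [l.NeBot] {f : α → ℝ} {q L : ℝ}
    (hf : Tendsto f l (𝓝[>] 0)) (hL : L ≠ 0) (h : Tendsto (fun x => f x ^ q) l (𝓝 L)) :
    q = 0 := by
  rcases lt_trichotomy q 0 with hq | hq | hq
  · exact absurd h <|
      not_tendsto_nhds_of_tendsto_atTop ((tendsto_rpow_neg_nhdsGT_zero hq).comp hf) L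
  · exact hq
  · have hzero : Tendsto (fun x => f x ^ q) l (𝓝 0) := by
      simpa [Function.comp_def, zero_rpow hq.ne'] using
        (continuousAt_rpow_const 0 q (Or.inr hq.le)).tendsto.comp (hf.mono_right nhdsWithin_le_nhds)
    exact absurd (tendsto_nhds_unique h hzero) hL

theorem tendsto_sub_left_nhdsLT (a : ℝ) : Tendsto (fun x => a - x) (𝓝[<] a) (𝓝[>] 0) :=
  tendsto_nhdsWithin_iff.2
    ⟨by simpa using ((continuous_sub_left a).tendsto a).mono_left nhdsWithin_le_nhds,
      eventually_nhdsWithin_of_forall fun _ hx => mem_Ioi.2 (sub_pos.2 hx)⟩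

theorem HasDerivAt.tendsto_div_sub_left {f : ℝ → ℝ} {f' x₀ : ℝ}
    (hf : HasDerivAt f f' x₀) (h0 : f x₀ = 0) :
    Tendsto (fun x => f x / (x₀ - x)) (𝓝[<] x₀) (𝓝 (-f')) := by
  refine ((hasDerivAt_iff_tendsto_slope.1 hf).mono_left
    (nhdsWithin_mono x₀ fun _ hx => ne_of_lt hx)).neg.congr fun x => ?_
  rw [slope_def_field, h0, sub_zero, ← div_neg, neg_sub]

theorem AnalyticAt.exists_nat_eq_of_tendsto_div_rpow {g : ℝ → ℝ} {x₀ p c : ℝ}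
    (hg : AnalyticAt ℝ g x₀) (hc : c ≠ 0)
    (h : Tendsto (fun x => g x / (x₀ - x) ^ p) (𝓝[<] x₀) (𝓝 c)) : ∃ m : ℕ, p = m := by
  have hne : ¬∀ᶠ x in 𝓝 x₀, g x = 0 := fun h0 => hc <| tendsto_nhds_unique h <|
    tendsto_const_nhds.congr' <| by
      filter_upwards [nhdsWithin_le_nhds h0] with x hx
      rw [hx, zero_div]
  obtain ⟨m, w, hw, hw0, hgw⟩ := hg.exists_eventuallyEq_pow_smul_nonzero_iff.2 hne
  have hunit : (-1 : ℝ) ^ m * w x₀ ≠ 0 := mul_ne_zero (pow_ne_zero m (by norm_num)) hw0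
  have hpow : (fun x => (x₀ - x) ^ ((m : ℝ) - p)) =ᶠ[𝓝[<] x₀]
      fun x => g x / (x₀ - x) ^ p / ((-1) ^ m * w x) := by
    filter_upwards [nhdsWithin_le_nhds hgw, self_mem_nhdsWithin,
      nhdsWithin_le_nhds (hw.continuousAt.eventually_ne hw0)] with x hgx hx hwx
    have ht : 0 < x₀ - x := sub_pos.2 hx
    rw [hgx, smul_eq_mul, show x - x₀ = -1 * (x₀ - x) by ring, mul_pow, rpow_sub ht,
      rpow_natCast]
    field_simp [pow_ne_zero m (by norm_num : (-1 : ℝ) ≠ 0), (rpow_pos_of_pos ht p).ne']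
  have hw_lim : Tendsto (fun x => (-1) ^ m * w x) (𝓝[<] x₀) (𝓝 ((-1) ^ m * w x₀)) :=
    (hw.continuousAt.tendsto.mono_left nhdsWithin_le_nhds).const_mul _
  have hm := eq_zero_of_tendsto_rpow (tendsto_sub_left_nhdsLT x₀) (div_ne_zero hc hunit)
    ((h.div hw_lim hunit).congr' hpow.symm)
  exact ⟨m, (sub_eq_zero.1 hm).symm⟩

theorem analytic_boundary_forces_integer_exponent
    (γ K R δ : ℝ) (U : ℝ → ℝ)
    (hγ1 : 1 < γ) (hK : 0 < K) (hδ : 0 < δ) (hδR : δ < R)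
    (hanal : ∃ ε > 0, ∀ x ∈ Metric.ball R ε, AnalyticAt ℝ U x)
    (hpos : ∀ r ∈ Ioo (R - δ) R, 0 < U r)
    (hU0 : U R = 0) (hU' : deriv U R ≠ 0)
    (hode : ∀ r ∈ Ioo (R - δ) R,
      deriv (deriv U) r + (2/r) * deriv U r + K * U r ^ (1/(γ-1)) = 0) :
    ∃ n : ℕ, 0 < n ∧ (1/(γ-1) : ℝ) = n := by
  obtain ⟨ε, hε, hanal⟩ := hanal
  have hUR : AnalyticAt ℝ U R := hanal R (Metric.mem_ball_self hε)
  have hR : R ≠ 0 := (hδ.trans hδR).ne'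
  have hleft : Ioo (R - δ) R ∈ 𝓝[<] R := Ioo_mem_nhdsLT (by linarith)
  have hslope := hUR.differentiableAt.hasDerivAt.tendsto_div_sub_left hU0
  have hc : 0 < -deriv U R := lt_of_le_of_ne
    (ge_of_tendsto hslope <| eventually_of_mem hleft fun r hr =>
      (div_pos (hpos r hr) (sub_pos.2 hr.2)).le)
    (neg_ne_zero.2 hU').symm
  set g : ℝ → ℝ := fun r => -(deriv (deriv U) r + 2 / r * deriv U r) / K
  have hg : AnalyticAt ℝ g R := by fun_prop (disch := assumption)
  have hasymp : Tendsto (fun r => g r / (R - r) ^ (1 / (γ - 1))) (𝓝[<] R)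
      (𝓝 ((-deriv U R) ^ (1 / (γ - 1)))) := by
    refine (hslope.rpow_const (Or.inl hc.ne')).congr' ?_
    filter_upwards [hleft] with r hr
    rw [div_rpow (hpos r hr).le (sub_pos.2 hr.2).le]
    congr 1
    rw [eq_div_iff hK.ne']
    linear_combination hode r hr
  obtain ⟨m, hm⟩ := hg.exists_nat_eq_of_tendsto_div_rpow (rpow_pos_of_pos hc _).ne' hasymp
  exact ⟨m, by exact_mod_cast hm ▸ one_div_pos.2 (sub_pos.2 hγ1), hm⟩
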